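/- arXiv:2202.11676 — 3 statements merged into one kernel-verified Lean document; each statement's English description precedes it below -/
import Mathlib

section
/- Let A be a commutative ring, I an ideal of A[T] containing a monic polynomial, and J = I ∩ A. Then there exists j ∈ J² with 1 + j ∈ I' ∩ A for any ideal I' of A[T] that contains a monic polynomial and satisfies I' + J²[T] = A[T]. More precisely: if I' ⊆ A[T] contains a monic polynomial and I' + J²A[T] = A[T], then (I' ∩ A) + J² = A, so there exists j ∈ J² with 1 + j ∈ I' ∩ A. -/
/-!
The quotient `A[X] ⧸ I'` by an ideal containing a monic polynomial is a finite `A`-module.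
If `I' + a[X] = A[X]`, then `a` extends to the unit ideal of this quotient, so Nakayama's lemma
gives `r ≡ 1 mod a` annihilating the quotient; such an `r` lies in `I' ∩ A`.
-/

open Polynomial

namespace Polynomial

variable {A : Type*} [CommRing A]

theorem Monic.finite_quotient_of_mem {I : Ideal A[X]} {f : A[X]} (hf : f.Monic) (hfI : f ∈ I) :
    Module.Finite A (A[X] ⧸ I) :=
  have := hf.finite_quotient
  have hle : Ideal.span {f} ≤ I := (Submodule.span_singleton_le_iff_mem f I).mpr hfI
  Module.Finite.of_surjective (Ideal.Quotient.factorₐ A hle).toLinearMap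
    (Ideal.Quotient.factor_surjective hle)

theorem map_algebraMap_quotient_eq_top_of_sup_map_C_eq_top {I : Ideal A[X]} {a : Ideal A}
    (hco : I ⊔ a.map C = ⊤) : a.map (algebraMap A (A[X] ⧸ I)) = ⊤ := by
  have h := congrArg (Ideal.map (Ideal.Quotient.mk I)) hco
  rwa [Ideal.map_sup, Ideal.map_quotient_self, bot_sup_eq, Ideal.map_top, Ideal.map_map] at h

/-- Lam, *Serre's Problem on Projective Modules*, Ch. III, Lemma 1.1. -/
theorem comap_C_sup_eq_top_of_monic_mem {I : Ideal A[X]} {f : A[X]} (hf : f.Monic) (hfI : f ∈ I)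
    {a : Ideal A} (hco : I ⊔ a.map C = ⊤) : I.comap C ⊔ a = ⊤ := by
  have := hf.finite_quotient_of_mem hfI
  have hsmul : (⊤ : Submodule A (A[X] ⧸ I)) ≤ a • ⊤ := by
    rw [Ideal.smul_top_eq_map, map_algebraMap_quotient_eq_top_of_sup_map_C_eq_top hco]
    rfl
  obtain ⟨r, hr1, hr⟩ := Submodule.exists_sub_one_mem_and_smul_eq_zero_of_fg_of_le_smul a ⊤
    Module.Finite.fg_top hsmul
  have hrI : r ∈ I.comap C := by
    rw [Ideal.mem_comap, ← Ideal.Quotient.eq_zero_iff_mem, ← mul_one (C r), ← smul_eq_C_mul]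
    exact hr 1 Submodule.mem_top
  rw [Ideal.eq_top_iff_one, show (1 : A) = r - (r - 1) by ring]
  exact Ideal.sub_mem _ (Ideal.mem_sup_left hrI) (Ideal.mem_sup_right hr1)

end Polynomial

theorem statement2_general {A : Type} [CommRing A]
    (J : Ideal A)
    (I' : Ideal A[X]) (hI' : ∃ f ∈ I', f.Monic)
    (hco : I' ⊔ (J ^ 2).map (Polynomial.C : A →+* A[X]) = ⊤) :
    I'.comap (Polynomial.C : A →+* A[X]) ⊔ J ^ 2 = ⊤ ∧
      ∃ j ∈ J ^ 2, 1 + j ∈ I'.comap (Polynomial.C : A →+* A[X]) := by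
  obtain ⟨f, hfI', hf⟩ := hI'
  have hsup := comap_C_sup_eq_top_of_monic_mem hf hfI' hco
  refine ⟨hsup, ?_⟩
  obtain ⟨p, hp, j, hj, hpj⟩ := Submodule.mem_sup.mp (Ideal.eq_top_iff_one _ |>.mp hsup)
  exact ⟨-j, neg_mem hj, by simpa [← hpj] using hp⟩

/-- Let `A` be commutative, `I ⊆ A[T]` an ideal containing a monic polynomial and
`J = I ∩ A`.  If `I' ⊆ A[T]` contains a monic polynomial and `I' + J²[T] = A[T]`, then
`(I' ∩ A) + J² = A`; in particular there exists `j ∈ J²` with `1 + j ∈ I' ∩ A`. -/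
theorem statement2 {A : Type} [CommRing A]
    (I : Ideal A[X]) (hI : ∃ f ∈ I, f.Monic)
    (J : Ideal A) (hJ : J = I.comap (Polynomial.C : A →+* A[X]))
    (I' : Ideal A[X]) (hI' : ∃ f ∈ I', f.Monic)
    (hco : I' ⊔ (J ^ 2).map (Polynomial.C : A →+* A[X]) = ⊤) :
    I'.comap (Polynomial.C : A →+* A[X]) ⊔ J ^ 2 = ⊤ ∧
      ∃ j ∈ J ^ 2, 1 + j ∈ I'.comap (Polynomial.C : A →+* A[X]) :=
  statement2_general J I' hI' hco
end

section
/- Let R be a commutative ring with projective stable range psr(R) ≤ d, let P be a projective R-module of rank d having a unimodular element, let a ⊆ R be an ideal, and let p ∈ P reduce to a unimodular element of P/aP. Then there exists q ∈ Um(P) with q ≡ p mod aP. -/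
/-- A module has (constant) rank `n` if all its localizations at primes are free of rank `n`. -/
def hasRank (A : Type) (M : Type) [CommRing A] [AddCommGroup M] [Module A M] (n : ℕ) : Prop :=
  ∀ (q : Ideal A) [q.IsPrime],
    Module.Free (Localization.AtPrime q) (LocalizedModule q.primeCompl M) ∧
      Module.finrank (Localization.AtPrime q) (LocalizedModule q.primeCompl M) = n

/-- An element of a module is unimodular if some linear functional sends it to `1`. -/
def IsUnimodular {A M : Type} [CommRing A] [AddCommGroup M] [Module A M] (x : M) : Prop :=
  ∃ φ : M →ₗ[A] A, φ x = 1

/-- Suppose the projective stable range of `R` is at most `d`, i.e. for every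
projective `R`-module `N` of rank `d` and `(x, r)` unimodular in `N ⊕ R` there is `y ∈ N` with
`x + r • y` unimodular in `N`.  Let `P` be a projective `R`-module of rank `d` having a
unimodular element, `a ⊆ R` an ideal, and `p ∈ P` an element whose reduction modulo `aP` is
unimodular in `P/aP`.  Then there is a unimodular `q ∈ P` with `q ≡ p mod aP`. -/
theorem statement11 {R : Type} [CommRing R] (d : ℕ)
    (hpsr : ∀ (N : Type) [AddCommGroup N] [Module R N], Module.Projective R N →
      hasRank R N d → ∀ (x : N) (r : R),
        (∃ φ : (N × R) →ₗ[R] R, φ (x, r) = 1) → ∃ y : N, IsUnimodular (A := R) (x + r • y))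
    (P : Type) [AddCommGroup P] [Module R P] [Module.Projective R P]
    (hrank : hasRank R P d)
    (hum : ∃ x : P, IsUnimodular (A := R) x)
    (a : Ideal R) (p : P)
    (hp : ∃ φ : (P ⧸ (a • ⊤ : Submodule R P)) →ₗ[R] (R ⧸ a),
      φ (Submodule.Quotient.mk p) = 1) :
    ∃ q : P, IsUnimodular (A := R) q ∧ q - p ∈ (a • ⊤ : Submodule R P) := by
  obtain ⟨φ, hφ⟩ := hp
  obtain ⟨ψ, hψ⟩ := Module.projective_lifting_property (a.mkQ)
    (φ ∘ₗ (a • ⊤ : Submodule R P).mkQ) (Submodule.mkQ_surjective a)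
  have hψp : a.mkQ (ψ p) = 1 := by
    have := congrArg (fun f => f p) hψ
    simpa [hφ] using this
  set r : R := 1 - ψ p with hrdef
  have hr : r ∈ a := by
    rw [← Submodule.Quotient.mk_eq_zero]
    have : (Submodule.Quotient.mk (1 - ψ p) : R ⧸ a) = 1 - a.mkQ (ψ p) := by
      simp [Submodule.Quotient.mk_sub]
    rw [hrdef, this, hψp, sub_self]
  obtain ⟨y, hy⟩ := hpsr P ‹Module.Projective R P› hrank p r
    ⟨ψ ∘ₗ LinearMap.fst R P R + LinearMap.snd R P R, by
      simp [hrdef]⟩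
  exact ⟨p + r • y, hy, by
    simpa using Submodule.smul_mem_smul hr (Submodule.mem_top : y ∈ ⊤)⟩
end

section
/- Let A be a Noetherian domain and I ⊆ A[T] an ideal with I = (f₁, f₂) + I²T. Set J = I ∩ A and suppose I_{1+J} = (g₁, g₂) in A_{1+J}[T] with g_i − f_i ∈ (I²T)_{1+J} for i = 1, 2. Then there exist F₁, F₂ ∈ I such that I = (F₁, F₂) and F_i − f_i ∈ I²T for i = 1, 2. -/
open Polynomial

/-- The multiplicative set `1 + J` for an ideal `J`. -/
def oneAdd {A : Type} [CommRing A] (J : Ideal A) : Submonoid A where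
  carrier := {x | ∃ j ∈ J, x = 1 + j}
  one_mem' := ⟨0, J.zero_mem, by ring⟩
  mul_mem' := by
    rintro x y ⟨j₁, hj₁, rfl⟩ ⟨j₂, hj₂, rfl⟩
    exact ⟨j₁ + j₂ + j₁ * j₂, by
      exact add_mem (add_mem hj₁ hj₂) (J.mul_mem_right _ hj₁), by ring⟩

/-!
Clearing denominators turns `I_{1+J} = (g₁, g₂)` into `v, w ∈ 1 + J` and a row `K ≡ v f`
modulo `I²T` with `w I ⊆ (K₁, K₂)`; write `v w = 1 + e`, so that `e ∈ J`. Once `v w` is inverted,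
`K` generates `I`; once `e` is inverted, `I` is the unit ideal, generated by the constant row
`a = f(0)` because `e ∈ (a₁, a₂)` by `I = (f₁, f₂) + I²T`. Completing both rows of length two to
`2 × 2` matrices gives a transition matrix `U` with `a U ∝ K` and `U(0)` scalar. Quillen's
splitting `U(T) = (U(T) U(λT)⁻¹) U(λT)`, with `λ ∈ e⁴ A` and `1 - λ ∈ (v w)² A`, factors `U` into
a matrix `V` invertible away from `e` and scalar modulo `T`, and a matrix `B` invertible away from
`v w` and scalar modulo `e T`. The rows `K adj B` and `a V` then agree up to units on the overlap,
so they glue, `v w` and `e` being coprime, to a row `F` that generates `I` and is `≡ f` modulo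
`I²T` on both sides.
-/

open Matrix

section General

variable {R : Type*} [CommRing R]

theorem Ideal.mem_of_isCoprime_of_mul_mem {N : Ideal R} {s t x : R} (h : IsCoprime s t)
    (hs : s * x ∈ N) (ht : t * x ∈ N) : x ∈ N := by
  obtain ⟨a, b, hab⟩ := h
  have hx : x = a * (s * x) + b * (t * x) := by linear_combination (-x) * hab
  rw [hx]
  exact N.add_mem (N.mul_mem_left a hs) (N.mul_mem_left b ht)

theorem IsCoprime.exists_smul_eq_and_smul_eq {M : Type*} [AddCommGroup M] [Module R M]
    {x y : R} (h : IsCoprime x y) {P Q : M} (hPQ : x • Q = y • P) :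
    ∃ G : M, x • G = P ∧ y • G = Q := by
  obtain ⟨a, b, hab⟩ := h
  refine ⟨a • P + b • Q, ?_, ?_⟩
  · calc x • (a • P + b • Q) = (a * x) • P + b • (x • Q) := by module
      _ = P := by rw [hPQ]; linear_combination (norm := module) hab • P
  · calc y • (a • P + b • Q) = a • (y • P) + (b * y) • Q := by module
      _ = Q := by rw [← hPQ]; linear_combination (norm := module) hab • Q

theorem Ideal.vecMul_apply_mem {n m : Type*} [Fintype n] {N : Ideal R} {u : n → R}
    (hu : ∀ i, u i ∈ N) (M : Matrix n m R) (j : m) : (u ᵥ* M) j ∈ N :=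
  N.sum_mem fun i _ => N.mul_mem_right _ (hu i)

theorem Ideal.le_of_isCoprime {ι : Type*} [Fintype ι] {I N : Ideal R} {K : ι → R} {s t : R}
    (hst : IsCoprime s t) (hI : ∀ h ∈ I, s * h ∈ Ideal.span (Set.range K))
    (hK : ∀ i, s * K i ∈ N) (ht : t ∈ N) : I ≤ N := by
  intro h hh
  obtain ⟨q, hq⟩ := Ideal.mem_span_range_iff_exists_fun.mp (hI h hh)
  refine Ideal.mem_of_isCoprime_of_mul_mem (hst.pow_left (m := 2)) ?_ (N.mul_mem_right h ht)
  rw [sq, mul_assoc, ← hq, Finset.mul_sum]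
  exact N.sum_mem fun i _ => by rw [mul_left_comm]; exact N.mul_mem_left _ (hK i)

theorem Matrix.adjugate_fin_two_smul_one_add (r : R) (M : Matrix (Fin 2) (Fin 2) R) :
    adjugate (r • 1 + M) = r • 1 + adjugate M := by
  ext i j
  fin_cases i <;> fin_cases j <;> simp [adjugate_fin_two]

end General

section Polynomials

variable {A : Type*} [CommRing A] {I : Ideal A[X]}

theorem Polynomial.sub_dvd_comp_sub_comp (p q r : A[X]) : q - r ∣ p.comp q - p.comp r := by
  simpa only [comp, eval₂_eq_eval_map] using sub_dvd_eval_sub q r (p.map C)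

theorem Matrix.exists_map_comp_sub_map_comp {m n : Type*} (U : Matrix m n A[X]) (q r : A[X]) :
    ∃ D : Matrix m n A[X], U.map (·.comp q) - U.map (·.comp r) = (q - r) • D := by
  choose D hD using fun i j => (U i j).sub_dvd_comp_sub_comp q r
  exact ⟨Matrix.of D, by ext i j; simp [hD]⟩

theorem X_dvd_C_eval_zero_sub (p : A[X]) : X ∣ C (p.eval 0) - p := by
  rw [X_dvd_iff, coeff_sub, coeff_C_zero, coeff_zero_eq_eval_zero, sub_self]

theorem mul_mul_mem_sq_mul_span_X {x y z : A[X]} (hx : x ∈ I) (hy : y ∈ I) (hz : X ∣ z) :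
    x * y * z ∈ I ^ 2 * Ideal.span {X} :=
  Ideal.mul_mem_mul (by rw [sq]; exact Ideal.mul_mem_mul hx hy) (Ideal.mem_span_singleton.mpr hz)

theorem sq_mul_span_X_le : I ^ 2 * Ideal.span {(X : A[X])} ≤ I :=
  Ideal.mul_le_left.trans (Ideal.pow_le_self two_ne_zero)

theorem mem_of_sub_mem_sq_mul_span_X {p q : A[X]} (hp : p ∈ I)
    (hq : q - p ∈ I ^ 2 * Ideal.span {X}) : q ∈ I := by
  simpa using I.add_mem hp (sq_mul_span_X_le hq)

theorem eval_zero_eq_zero_of_mem_sq_mul_span_X {p : A[X]} (hp : p ∈ I ^ 2 * Ideal.span {X}) :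
    p.eval 0 = 0 := by
  rw [← coeff_zero_eq_eval_zero, ← X_dvd_iff, ← Ideal.mem_span_singleton]
  exact Ideal.mul_le_right (I := I ^ 2) hp

theorem exists_dotProduct_eval_zero_eq {ι : Type*} [Fintype ι] {f : ι → A[X]} {x : A[X]}
    (hx : x ∈ Ideal.span (Set.range f) ⊔ I ^ 2 * Ideal.span {X}) :
    ∃ c : ι → A, c ⬝ᵥ (fun i => (f i).eval 0) = x.eval 0 := by
  obtain ⟨y, hy, d, hd, rfl⟩ := Submodule.mem_sup.mp hx
  obtain ⟨q, rfl⟩ := Ideal.mem_span_range_iff_exists_fun.mp hy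
  refine ⟨fun i => (q i).eval 0, ?_⟩
  simp [dotProduct, eval_finsetSum, eval_zero_eq_zero_of_mem_sq_mul_span_X hd]

end Polynomials

section Clearing

attribute [local instance] Polynomial.algebra Polynomial.isLocalization

theorem IsLocalization.exists_mul_mem_of_map_le {R S : Type*} [CommRing R] [CommRing S]
    [Algebra R S] (M : Submonoid R) [IsLocalization M S] {I N : Ideal R} (hI : I.FG)
    (h : I.map (algebraMap R S) ≤ N.map (algebraMap R S)) :
    ∃ m ∈ M, ∀ x ∈ I, m * x ∈ N := by
  classical
  obtain ⟨s, rfl⟩ := hI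
  choose m hm hmx using fun x (hx : x ∈ s) => (algebraMap_mem_map_algebraMap_iff M S N x).mp
    (h (Ideal.mem_map_of_mem _ (Ideal.subset_span hx)))
  refine ⟨∏ x ∈ s.attach, m x.1 x.2, prod_mem fun x _ => hm x.1 x.2, fun x hx => ?_⟩
  refine (Ideal.span_le (I := Submodule.comap (LinearMap.mulLeft R _) N)).mpr (fun x hx => ?_) hx
  obtain ⟨r, hr⟩ :=
    Finset.dvd_prod_of_mem (fun y : s => m y.1 y.2) (Finset.mem_attach _ ⟨x, hx⟩)
  simp only [SetLike.mem_coe, Submodule.mem_comap, LinearMap.mulLeft_apply, hr]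
  rw [mul_right_comm]
  exact N.mul_mem_right _ (hmx x hx)

variable {A S : Type*} [CommRing A] [CommRing S] [Algebra A S]

theorem exists_C_mul_eq_map_of_sub_mem_map (M : Submonoid A) [IsLocalization M S]
    {𝔦 : Ideal A[X]} {f : A[X]} {g : S[X]}
    (hg : g - f.map (algebraMap A S) ∈ 𝔦.map (mapRingHom (algebraMap A S))) :
    ∃ t ∈ M, ∃ δ ∈ 𝔦,
      C (algebraMap A S t) * g = (C t * f + δ).map (algebraMap A S) := by
  obtain ⟨⟨⟨δ, hδ⟩, ⟨_, t, ht, rfl⟩⟩, h⟩ :=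
    (IsLocalization.mem_map_algebraMap_iff (M.map C) S[X]).mp hg
  refine ⟨t, ht, δ, hδ, ?_⟩
  change (g - f.map (algebraMap A S)) * (C t).map (algebraMap A S) = δ.map _ at h
  rw [Polynomial.map_C] at h
  rw [Polynomial.map_add, Polynomial.map_mul, Polynomial.map_C, ← h]
  ring

theorem exists_mul_mem_span_of_map_eq_span {ι : Type*} [Fintype ι] [DecidableEq ι]
    (M : Submonoid A) [IsLocalization M S] {I 𝔦 : Ideal A[X]} (hI : I.FG) {f : ι → A[X]}
    {g : ι → S[X]} (hloc : I.map (mapRingHom (algebraMap A S)) = Ideal.span (Set.range g))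
    (hg : ∀ i, g i - (f i).map (algebraMap A S) ∈ 𝔦.map (mapRingHom (algebraMap A S))) :
    ∃ v ∈ M, ∃ w ∈ M, ∃ ε : ι → A[X], (∀ i, ε i ∈ 𝔦) ∧
      ∀ h ∈ I, C w * h ∈ Ideal.span (Set.range fun i => C v * f i + ε i) := by
  choose t ht δ hδ hgt using fun i => exists_C_mul_eq_map_of_sub_mem_map M (hg i)
  set ε : ι → A[X] := fun i => C (∏ j ∈ Finset.univ.erase i, t j) * δ i
  set K : ι → A[X] := fun i => C (∏ j, t j) * f i + ε i
  have hle : I.map (algebraMap A[X] S[X]) ≤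
      (Ideal.span (Set.range K)).map (algebraMap A[X] S[X]) := by
    change I.map (mapRingHom (algebraMap A S)) ≤ _
    rw [hloc, Ideal.span_le]
    rintro _ ⟨i, rfl⟩
    have hu : IsUnit (C (algebraMap A S (∏ j, t j))) :=
      (IsLocalization.map_units S ⟨_, prod_mem fun j _ => ht j⟩).map C
    refine (Ideal.unit_mul_mem_iff_mem _ hu).mp ?_
    have : C (algebraMap A S (∏ j, t j)) * g i = algebraMap A[X] S[X] (K i) := by
      change _ = (K i).map (algebraMap A S)
      simp only [K, ε]
      rw [← Finset.prod_erase_mul _ _ (Finset.mem_univ i), map_mul, map_mul, mul_assoc, hgt]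
      simp only [Polynomial.map_add, Polynomial.map_mul, Polynomial.map_C, map_mul]
      ring
    rw [this]
    exact Ideal.mem_map_of_mem _ (Ideal.subset_span ⟨i, rfl⟩)
  obtain ⟨_, ⟨w, hw, rfl⟩, hwI⟩ := IsLocalization.exists_mul_mem_of_map_le (M.map C) hI hle
  exact ⟨_, prod_mem fun j _ => ht j, w, hw, ε, fun i => 𝔦.mul_mem_left _ (hδ i), hwI⟩

end Clearing

section Completions

variable {A : Type*} [CommRing A] (v w e : A) (a c : Fin 2 → A) (K p : Fin 2 → A[X])

noncomputable def constCompletion : Matrix (Fin 2) (Fin 2) A[X] :=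
  !![C (v * e * a 0), C (v * e * a 1); -C (c 1), C (c 0)]

/-- The completion `(-p 1, p 0)` of `K`, corrected by a multiple of `K` so that at `T = 0` the
matrix is `w e • constCompletion v e a c`. -/
noncomputable def rowCompletion : Matrix (Fin 2) (Fin 2) A[X] :=
  !![C (w * e ^ 2) * K 0, C (w * e ^ 2) * K 1;
    C (c 0 * (p 1).eval 0 - c 1 * (p 0).eval 0) * K 0 - C (v * e) * p 1,
    C (c 0 * (p 1).eval 0 - c 1 * (p 0).eval 0) * K 1 + C (v * e) * p 0]

variable {v w e a c K p}

theorem det_constCompletion (hca : c ⬝ᵥ a = e) :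
    (constCompletion v e a c).det = C (v * e ^ 2) := by
  rw [vec2_dotProduct] at hca
  rw [constCompletion, det_fin_two_of, ← hca]
  simp only [map_mul, map_add, map_pow]
  ring

theorem det_rowCompletion (hpK : p ⬝ᵥ K = C (w * e)) :
    (rowCompletion v w e c K p).det = C (v * w * e ^ 3) * C (w * e) := by
  rw [vec2_dotProduct] at hpK
  rw [rowCompletion, det_fin_two_of, ← hpK]
  simp only [map_mul, map_pow]
  ring

theorem rowCompletion_map_comp_zero (hca : c ⬝ᵥ a = e) (hpK : p ⬝ᵥ K = C (w * e))
    (hK0 : ∀ i, (K i).eval 0 = v * a i) :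
    (rowCompletion v w e c K p).map (·.comp 0) = C (w * e) • constCompletion v e a c := by
  rw [vec2_dotProduct] at hca hpK
  have h0 : v * ((p 0).eval 0 * a 0 + (p 1).eval 0 * a 1) = w * e := by
    have := congrArg (eval 0) hpK
    simp only [eval_add, eval_mul, hK0, eval_C] at this
    linear_combination this
  have hC0 := congrArg C h0
  have hCca := congrArg C hca
  simp only [map_mul, map_add] at hC0 hCca
  rw [← Matrix.ext_iff]
  intro i j
  fin_cases i <;> fin_cases j <;>
    simp only [rowCompletion, constCompletion, map_apply, Matrix.smul_apply, of_apply, cons_val',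
      cons_val_zero, cons_val_one, cons_val_fin_one, Fin.isValue, Fin.zero_eta, Fin.mk_one,
      comp_zero, eval_add, eval_sub, eval_mul, eval_pow, eval_C, hK0, smul_eq_mul, mul_neg,
      map_mul, map_pow, map_sub, map_add]
  · ring
  · ring
  · linear_combination -C (c 1) * hC0 + C v * C (eval 0 (p 1)) * hCca
  · linear_combination C (c 0) * hC0 - C v * C (eval 0 (p 0)) * hCca

theorem vecMul_adjugate_constCompletion_mul (hca : c ⬝ᵥ a = e) :
    (C ∘ a) ᵥ* (adjugate (constCompletion v e a c) * rowCompletion v w e c K p) =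
      C (w * e ^ 3) • K := by
  have hCca := congrArg C hca
  simp only [vec2_dotProduct, map_mul, map_add] at hCca
  ext j : 1
  fin_cases j <;>
    simp only [constCompletion, rowCompletion, adjugate_fin_two_of, mul_fin_two, vecMul,
      vec2_dotProduct, of_apply, cons_val', cons_val_zero, cons_val_one, cons_val_fin_one,
      Fin.isValue, Fin.zero_eta, Fin.mk_one, Function.comp_apply, Pi.smul_apply, smul_eq_mul,
      map_mul, map_pow]
  · linear_combination C w * C e ^ 2 * K 0 * hCca
  · linear_combination C w * C e ^ 2 * K 1 * hCca

theorem vecMul_adjugate_rowCompletion_mul (hpK : p ⬝ᵥ K = C (w * e)) :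
    K ᵥ* (adjugate (rowCompletion v w e c K p) * constCompletion v e a c) =
      C (v ^ 2 * w * e ^ 3) • (C ∘ a) := by
  rw [vec2_dotProduct, map_mul] at hpK
  ext j : 1
  fin_cases j <;>
    simp only [constCompletion, rowCompletion, adjugate_fin_two_of, mul_fin_two, vecMul,
      vec2_dotProduct, of_apply, cons_val', cons_val_zero, cons_val_one, cons_val_fin_one,
      Fin.isValue, Fin.zero_eta, Fin.mk_one, Function.comp_apply, Pi.smul_apply, smul_eq_mul,
      map_mul, map_pow]
  · linear_combination C v ^ 2 * C e ^ 2 * C (a 0) * hpK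
  · linear_combination C v ^ 2 * C e ^ 2 * C (a 1) * hpK

end Completions

section Transition

variable {A : Type*} [CommRing A]

theorem exists_transition_matrix {v w e : A} {a c : Fin 2 → A} {K p : Fin 2 → A[X]}
    (hca : c ⬝ᵥ a = e) (hpK : p ⬝ᵥ K = C (w * e)) (hK0 : ∀ i, (K i).eval 0 = v * a i) :
    ∃ U : Matrix (Fin 2) (Fin 2) A[X], (C ∘ a) ᵥ* U = C (w * e ^ 3) • K ∧
      K ᵥ* adjugate U = C (v ^ 2 * w * e ^ 3) • (C ∘ a) ∧ U.det = C (v * w * e ^ 3) ^ 2 ∧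
      U.map (·.comp 0) = C (v * w * e ^ 3) • 1 := by
  set N := constCompletion v e a c
  set S := rowCompletion v w e c K p
  refine ⟨adjugate N * S, vecMul_adjugate_constCompletion_mul hca, ?_, ?_, ?_⟩
  · rw [adjugate_mul_distrib, adjugate_adjugate _ (by simp), Fintype.card_fin, tsub_self,
      pow_zero, one_smul]
    exact vecMul_adjugate_rowCompletion_mul hpK
  · rw [det_mul, det_adjugate, det_rowCompletion hpK, det_constCompletion hca]
    simp only [Fintype.card_fin, map_mul, map_pow]
    ring
  · have hN0 : (adjugate N).map (·.comp 0) = adjugate N := by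
      ext i j : 1
      fin_cases i <;> fin_cases j <;> simp [N, constCompletion, adjugate_fin_two_of]
    change (compRingHom 0).mapMatrix (adjugate N * S) = _
    rw [map_mul]
    change (adjugate N).map (·.comp 0) * S.map (·.comp 0) = _
    rw [hN0, rowCompletion_map_comp_zero hca hpK hK0, mul_smul_comm, adjugate_mul,
      det_constCompletion hca, smul_smul, ← map_mul]
    congr 2
    ring

theorem exists_quillen_splitting [IsDomain A] {u e : A} {k : ℕ} {U : Matrix (Fin 2) (Fin 2) A[X]}
    (hue : IsCoprime u e) (he : e ≠ 0) (hU0 : U.map (·.comp 0) = C (u * e ^ k) • 1)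
    (hdet : U.det = C (u * e ^ k) ^ 2) :
    ∃ B V : Matrix (Fin 2) (Fin 2) A[X], B.det = C u ^ 2 ∧
      U * adjugate (C e ^ k • B) = C u ^ 2 • V ∧
      (∃ M, adjugate B = C u • 1 + (C e * X) • M) ∧
      ∃ M, V = C e ^ (2 * k) • 1 + (X : A[X]) • M := by
  obtain ⟨α, β, hαβ⟩ := hue.pow (m := 2) (n := k + 1)
  -- With `λ = β e ^ (k + 1)` and `1 - λ = α u ^ 2`, the matrix `U(λT) = e ^ k B` is `u` modulo
  -- `e T`, and `U - U(λT)` is divisible by `(1 - λ) T`.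
  set l := β * e ^ (k + 1)
  obtain ⟨D, hD⟩ := U.exists_map_comp_sub_map_comp (C l * X) 0
  obtain ⟨W, hW⟩ := U.exists_map_comp_sub_map_comp X (C l * X)
  set UL := U.map (·.comp (C l * X))
  set B := C u • (1 : Matrix (Fin 2) (Fin 2) A[X]) + (C (β * e) * X) • D
  have hUL : UL = C e ^ k • B := by
    rw [eq_add_of_sub_eq hD, hU0]
    simp only [B, l, sub_zero, smul_add, smul_smul, map_mul, map_pow]
    rw [add_comm]; congr 2 <;> ring
  have hdetUL : UL.det = C (u * e ^ k) ^ 2 := by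
    change ((compRingHom _).mapMatrix U).det = _
    rw [← RingHom.map_det, hdet]; simp
  have hdetB : B.det = C u ^ 2 := by
    have hCe : (C e ^ k) ^ 2 ≠ 0 := pow_ne_zero _ (pow_ne_zero _ (C_ne_zero.mpr he))
    refine mul_left_cancel₀ hCe ?_
    have h := det_smul B (C e ^ k)
    rw [Fintype.card_fin, ← hUL, hdetUL] at h
    rw [← h]; simp only [map_mul, map_pow]; ring
  have hU : U = UL + (C (α * u ^ 2) * X) • W := by
    have hX : U.map (·.comp X) = U := by ext; simp
    rw [← hX, eq_add_of_sub_eq' hW, show α * u ^ 2 = 1 - l by linear_combination hαβ]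
    congr 2
    simp only [map_sub, map_one]; ring
  refine ⟨B, C e ^ (2 * k) • 1 + X • (C α • (W * adjugate UL)), hdetB, ?_,
    ⟨C β • adjugate D, ?_⟩, _, rfl⟩
  · rw [← hUL]
    conv_lhs => rw [hU]
    rw [add_mul, mul_adjugate, hdetUL, smul_mul_assoc]
    simp only [smul_add, smul_smul, map_mul, map_pow]
    congr 2 <;> ring
  · rw [adjugate_fin_two_smul_one_add, adjugate_smul]
    simp only [Fintype.card_fin, smul_smul, map_mul]
    congr 2; ring

end Transition

section Gluing

variable {R : Type*} [CommRing R] {v w e : R} {a K G : Fin 2 → R}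
  {U B V : Matrix (Fin 2) (Fin 2) R}

theorem exists_glued_row [IsDomain R] (hw : w ≠ 0) (hcop : IsCoprime (v ^ 2 * w) (e ^ 6))
    (haU : a ᵥ* U = (w * e ^ 3) • K) (hUV : U * adjugate (e ^ 3 • B) = (v * w) ^ 2 • V) :
    ∃ G, (v ^ 2 * w) • G = K ᵥ* adjugate B ∧ e ^ 6 • G = a ᵥ* V := by
  refine hcop.exists_smul_eq_and_smul_eq (smul_right_injective _ hw ?_)
  calc w • (v ^ 2 * w) • (a ᵥ* V) = a ᵥ* (U * adjugate (e ^ 3 • B)) := by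
        rw [hUV, vecMul_smul, smul_smul]; ring_nf
    _ = w • e ^ 6 • (K ᵥ* adjugate B) := by
        rw [← vecMul_vecMul, haU, adjugate_smul, Fintype.card_fin, vecMul_smul, smul_vecMul,
          smul_smul, smul_smul]; ring_nf

theorem glued_row_vecMul_eq [IsDomain R] (hv : v ≠ 0) (hw : w ≠ 0)
    (hKU : K ᵥ* adjugate U = (v ^ 2 * w * e ^ 3) • a) (hB : B.det = (v * w) ^ 2)
    (hUV : U * adjugate (e ^ 3 • B) = (v * w) ^ 2 • V)
    (hGP : (v ^ 2 * w) • G = K ᵥ* adjugate B) :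
    G ᵥ* B = w • K ∧ G ᵥ* adjugate V = e ^ 6 • a := by
  have hGB : G ᵥ* B = w • K := by
    refine smul_right_injective _ (by positivity : v ^ 2 * w ≠ 0) ?_
    simp only
    rw [← smul_vecMul, hGP, vecMul_vecMul, adjugate_mul, hB, vecMul_smul, vecMul_one, smul_smul]
    ring_nf
  refine ⟨hGB, smul_right_injective _ (by positivity : (v * w) ^ 2 ≠ 0) ?_⟩
  simp only
  have hV : (v * w) ^ 2 • adjugate V = adjugate ((v * w) ^ 2 • V) := by
    rw [adjugate_smul, Fintype.card_fin, pow_one]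
  rw [← vecMul_smul, hV, ← hUV, adjugate_mul_distrib, adjugate_adjugate _ (by simp),
    Fintype.card_fin, tsub_self, pow_zero, one_smul, ← vecMul_vecMul, vecMul_smul, hGB,
    smul_vecMul, smul_vecMul, hKU, smul_smul, smul_smul, smul_smul]
  ring_nf

theorem le_span_glued_row {I : Ideal R} (hcop : IsCoprime w e)
    (hwI : ∀ h ∈ I, w * h ∈ Ideal.span (Set.range K)) (ha : e ∈ Ideal.span (Set.range a))
    (hGB : G ᵥ* B = w • K) (hGV : G ᵥ* adjugate V = e ^ 6 • a) :
    I ≤ Ideal.span (Set.range G) := by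
  have hG : ∀ j, G j ∈ Ideal.span (Set.range G) := fun j => Ideal.subset_span ⟨j, rfl⟩
  refine Ideal.le_of_isCoprime (hcop.pow_right (n := 7)) hwI (fun i => ?_) ?_
  · simpa [hGB] using Ideal.vecMul_apply_mem hG B i
  · obtain ⟨c, hc⟩ := Ideal.mem_span_range_iff_exists_fun.mp ha
    have h7 : e ^ 7 = ∑ i, c i * (G ᵥ* adjugate V) i := by
      simp only [hGV, Pi.smul_apply, smul_eq_mul, mul_left_comm _ (e ^ 6), ← Finset.mul_sum, hc]
      ring
    rw [h7]
    exact Ideal.sum_mem _ fun i _ => Ideal.mul_mem_left _ _ (Ideal.vecMul_apply_mem hG _ i)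

end Gluing

section Patching

variable {A : Type*} [CommRing A] {I : Ideal A[X]}

theorem glued_row_sub_mem_sq_mul_span_X {v w e : A} {f K G : Fin 2 → A[X]}
    {B V M M' : Matrix (Fin 2) (Fin 2) A[X]} (hcop : IsCoprime (C v * C w) (C e)) (hCe : C e ∈ I)
    (hK : ∀ i, K i - C v * f i ∈ I ^ 2 * Ideal.span {X}) (hKI : ∀ i, K i ∈ I)
    (hGP : (C v ^ 2 * C w) • G = K ᵥ* adjugate B)
    (hGQ : C e ^ 6 • G = (fun i => C ((f i).eval 0)) ᵥ* V)
    (hM : adjugate B = (C v * C w) • 1 + (C e * X) • M)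
    (hM' : V = C e ^ 6 • 1 + (X : A[X]) • M')
    (i : Fin 2) : G i - f i ∈ I ^ 2 * Ideal.span {X} := by
  refine Ideal.mem_of_isCoprime_of_mul_mem
    ((hcop.of_mul_left_left.mul_left hcop).pow_right (n := 8)) ?_ ?_
  · have hP := congrFun hGP i
    rw [hM, vecMul_add, vecMul_smul, vecMul_smul, vecMul_one] at hP
    simp only [Pi.smul_apply, smul_eq_mul, Pi.add_apply] at hP
    have : C v * (C v * C w) * (G i - f i)
        = C v * C w * (K i - C v * f i) + C e * (K ᵥ* M) i * X := by
      linear_combination hP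
    rw [this]
    exact Ideal.add_mem _ (Ideal.mul_mem_left _ _ (hK i))
      (mul_mul_mem_sq_mul_span_X hCe (Ideal.vecMul_apply_mem hKI M i) dvd_rfl)
  · have hQ := congrFun hGQ i
    rw [hM', vecMul_add, vecMul_smul, vecMul_smul, vecMul_one] at hQ
    simp only [Pi.smul_apply, smul_eq_mul, Pi.add_apply] at hQ
    have : C e ^ 8 * (G i - f i) = C e * C e * (C e ^ 6 * (C ((f i).eval 0) - f i))
        + C e * C e * (X * ((fun i => C ((f i).eval 0)) ᵥ* M') i) := by
      linear_combination C e ^ 2 * hQ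
    rw [this]
    exact Ideal.add_mem _
      (mul_mul_mem_sq_mul_span_X hCe hCe (dvd_mul_of_dvd_right (X_dvd_C_eval_zero_sub _) _))
      (mul_mul_mem_sq_mul_span_X hCe hCe (dvd_mul_right _ _))

theorem exists_generators_of_eq_top {ι : Type*} [Fintype ι] {f : ι → A[X]}
    (hgen : ⊤ = Ideal.span (Set.range f) ⊔ ⊤ ^ 2 * Ideal.span {X}) :
    ∃ G : ι → A[X], ⊤ = Ideal.span (Set.range G) ∧
      ∀ i, G i - f i ∈ (⊤ : Ideal A[X]) ^ 2 * Ideal.span {X} := by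
  obtain ⟨c, hc⟩ :=
    exists_dotProduct_eval_zero_eq (hgen ▸ Submodule.mem_top : (1 : A[X]) ∈ _)
  refine ⟨fun i => C ((f i).eval 0), (Ideal.eq_top_iff_one _).mpr ?_ |>.symm, fun i => ?_⟩
  · refine Ideal.mem_span_range_iff_exists_fun.mpr ⟨fun i => C (c i), ?_⟩
    simp only [← map_mul, ← map_sum]
    rw [← dotProduct, hc, eval_one, map_one]
  · rw [Ideal.top_pow, Ideal.top_mul]
    exact Ideal.mem_span_singleton.mpr (X_dvd_C_eval_zero_sub _)

theorem exists_generators_of_mul_eq_one {ι : Type*} [Fintype ι] {f K : ι → A[X]} {v w : A}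
    (hvw : v * w = 1) (hf : ∀ i, f i ∈ I)
    (hK : ∀ i, K i - C v * f i ∈ I ^ 2 * Ideal.span {X})
    (hwI : ∀ h ∈ I, C w * h ∈ Ideal.span (Set.range K)) :
    ∃ G : ι → A[X], I = Ideal.span (Set.range G) ∧
      ∀ i, G i - f i ∈ I ^ 2 * Ideal.span {X} := by
  have hCvw : C v * C w = 1 := by rw [← map_mul, hvw, map_one]
  refine ⟨fun i => C w * K i, le_antisymm ?_ (Ideal.span_le.mpr ?_), fun i => ?_⟩
  · exact Ideal.le_of_isCoprime (isCoprime_zero_right.mpr (IsUnit.of_mul_eq_one_right (C v) hCvw))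
      hwI (fun i => Ideal.subset_span ⟨i, rfl⟩) (zero_mem _)
  · rintro _ ⟨i, rfl⟩
    exact I.mul_mem_left _ (mem_of_sub_mem_sq_mul_span_X (I.mul_mem_left _ (hf i)) (hK i))
  · have : C w * K i - f i = C w * (K i - C v * f i) := by linear_combination f i * hCvw
    rw [this]
    exact Ideal.mul_mem_left _ _ (hK i)

theorem exists_generators_of_patching [IsDomain A] {f K : Fin 2 → A[X]} {v w e : A}
    (hvw : v * w = 1 + e) (hI : I ≠ ⊤) (he : e ≠ 0) (hCe : C e ∈ I)
    (hf : ∀ i, f i ∈ I) (hef : ∃ c : Fin 2 → A, c ⬝ᵥ (fun i => (f i).eval 0) = e)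
    (hK : ∀ i, K i - C v * f i ∈ I ^ 2 * Ideal.span {X})
    (hwI : ∀ h ∈ I, C w * h ∈ Ideal.span (Set.range K)) :
    ∃ G : Fin 2 → A[X], I = Ideal.span (Set.range G) ∧
      ∀ i, G i - f i ∈ I ^ 2 * Ideal.span {X} := by
  obtain ⟨c, hc⟩ := hef
  have hcopA : IsCoprime (v * w) e := ⟨1, -1, by linear_combination hvw⟩
  have hcop : IsCoprime (C v * C w) (C e) := by simpa using hcopA.map C
  have hvw0 : C v * C w ≠ 0 := fun h0 => hI <| I.eq_top_of_isUnit_mem hCe <| by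
    rw [← map_mul, C_eq_zero, hvw] at h0
    rw [show e = -1 by linear_combination h0]; simp
  have hKI : ∀ i, K i ∈ I := fun i =>
    mem_of_sub_mem_sq_mul_span_X (I.mul_mem_left _ (hf i)) (hK i)
  have hK0 : ∀ i, (K i).eval 0 = v * (f i).eval 0 := fun i => by
    simpa [sub_eq_zero] using eval_zero_eq_zero_of_mem_sq_mul_span_X (hK i)
  obtain ⟨p, hp⟩ := Ideal.mem_span_range_iff_exists_fun.mp (hwI _ hCe)
  obtain ⟨U, haU, hKU, hdetU, hU0⟩ :=
    exists_transition_matrix hc (by rw [map_mul]; exact hp) hK0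
  obtain ⟨B, V, hB, hUV, ⟨M, hM⟩, ⟨M', hM'⟩⟩ :=
    exists_quillen_splitting hcopA he hU0 hdetU
  simp only [map_mul, map_pow] at haU hKU hB hUV hM
  obtain ⟨G, hGP, hGQ⟩ := exists_glued_row (right_ne_zero_of_mul hvw0)
    (by rw [sq, mul_assoc]; exact (hcop.of_mul_left_left.mul_left hcop).pow_right) haU hUV
  obtain ⟨hGB, hGV⟩ := glued_row_vecMul_eq (left_ne_zero_of_mul hvw0)
    (right_ne_zero_of_mul hvw0) hKU hB hUV hGP
  have hGf := glued_row_sub_mem_sq_mul_span_X hcop hCe hK hKI hGP hGQ hM hM'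
  have ha : C e ∈ Ideal.span (Set.range (C ∘ fun i => (f i).eval 0)) :=
    Ideal.mem_span_range_iff_exists_fun.mpr ⟨C ∘ c, by simp [← hc, dotProduct]⟩
  refine ⟨G, le_antisymm (le_span_glued_row hcop.of_mul_left_right hwI ha hGB hGV)
    (Ideal.span_le.mpr ?_), hGf⟩
  rintro _ ⟨i, rfl⟩
  exact mem_of_sub_mem_sq_mul_span_X (hf i) (hGf i)

end Patching

theorem exists_generators_of_localization {A : Type} [CommRing A] [IsDomain A]
    [IsNoetherianRing A] {I : Ideal A[X]} {f : Fin 2 → A[X]} (hf : ∀ i, f i ∈ I)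
    (hgen : I = Ideal.span (Set.range f) ⊔ I ^ 2 * Ideal.span {X}) {J : Ideal A}
    (hJ : J = I.comap C) {g : Fin 2 → (Localization (oneAdd J))[X]}
    (hloc : I.map (mapRingHom (algebraMap A _)) = Ideal.span (Set.range g))
    (hg : ∀ i, g i - (f i).map (algebraMap A _) ∈
      (I ^ 2 * Ideal.span {X}).map (mapRingHom (algebraMap A (Localization (oneAdd J))))) :
    ∃ G : Fin 2 → A[X], I = Ideal.span (Set.range G) ∧
      ∀ i, G i - f i ∈ I ^ 2 * Ideal.span {X} := by
  by_cases hIT : I = ⊤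
  · subst hIT
    exact exists_generators_of_eq_top hgen
  obtain ⟨v, hv, w, hw, ε, hε, hwI⟩ :=
    exists_mul_mem_span_of_map_eq_span (oneAdd J) (IsNoetherian.noetherian I) hloc hg
  have hK : ∀ i, C v * f i + ε i - C v * f i ∈ I ^ 2 * Ideal.span {X} := by simpa using hε
  obtain ⟨e, heJ, hvw⟩ := (oneAdd J).mul_mem hv hw
  have hCe : C e ∈ I := by rw [hJ] at heJ; exact heJ
  by_cases he : e = 0
  · exact exists_generators_of_mul_eq_one (by rw [hvw, he, add_zero]) hf hK hwI
  · obtain ⟨c, hc⟩ := exists_dotProduct_eval_zero_eq (hgen ▸ hCe)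
    exact exists_generators_of_patching hvw hIT he hCe hf ⟨c, by rw [hc, eval_C]⟩ hK hwI

/-- Let `A` be a Noetherian domain, `I ⊆ A[T]` with `I = (f₁, f₂) + I²T` and
`J = I ∩ A`.  If `I_{1+J} = (g₁, g₂)` with `g_i − f_i ∈ (I²T)_{1+J}`, then `I = (F₁, F₂)` with
`F_i − f_i ∈ I²T`. -/
theorem statement15 {A : Type} [CommRing A] [IsDomain A] [IsNoetherianRing A]
    (I : Ideal (Polynomial A))
    (f₁ f₂ : Polynomial A) (hf₁ : f₁ ∈ I) (hf₂ : f₂ ∈ I)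
    (hgen : I = Ideal.span {f₁, f₂} ⊔ I ^ 2 * Ideal.span {(X : Polynomial A)})
    (J : Ideal A) (hJ : J = I.comap (Polynomial.C : A →+* Polynomial A))
    (g₁ g₂ : Polynomial (Localization (oneAdd J)))
    (hloc : I.map (Polynomial.mapRingHom (algebraMap A (Localization (oneAdd J)))) =
      Ideal.span {g₁, g₂})
    (hg₁ : g₁ - f₁.map (algebraMap A (Localization (oneAdd J))) ∈
      (I ^ 2 * Ideal.span {(X : Polynomial A)}).map
        (Polynomial.mapRingHom (algebraMap A (Localization (oneAdd J)))))
    (hg₂ : g₂ - f₂.map (algebraMap A (Localization (oneAdd J))) ∈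
      (I ^ 2 * Ideal.span {(X : Polynomial A)}).map
        (Polynomial.mapRingHom (algebraMap A (Localization (oneAdd J))))) :
    ∃ F₁ F₂ : Polynomial A, I = Ideal.span {F₁, F₂} ∧
      F₁ - f₁ ∈ I ^ 2 * Ideal.span {(X : Polynomial A)} ∧
      F₂ - f₂ ∈ I ^ 2 * Ideal.span {(X : Polynomial A)} := by
  rw [← range_cons_cons_empty f₁ f₂ ![]] at hgen
  rw [← range_cons_cons_empty g₁ g₂ ![]] at hloc
  obtain ⟨G, hG, hGf⟩ := exists_generators_of_localization (Fin.forall_fin_two.mpr ⟨hf₁, hf₂⟩)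
    hgen hJ hloc (Fin.forall_fin_two.mpr ⟨hg₁, hg₂⟩)
  refine ⟨G 0, G 1, ?_, hGf 0, hGf 1⟩
  rw [hG, ← range_cons_cons_empty (G 0) (G 1) ![]]
  congr
  ext i
  fin_cases i <;> rfl
end
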